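/- Let Λ₀ and Λ be full-rank ℤ-lattices in ℝ^d with Λ ⊆ Λ₀. Then θ(Λ) ≤ I(B_{Λ₀})^{−1} · I(ℝ^d ∖ B_Λ). -/

import Mathlib

/-!
Because `f x * f y ≤ f (x + y)` and Lebesgue measure is translation invariant,
`f b · I(B_{Λ₀}) ≤ ∫_{ball b r(Λ₀)} f` for every `b`. For distinct `b, b' ∈ Λ ∖ {0}` these balls
are disjoint, since `b - b' ∈ Λ₀ ∖ {0}` has norm `≥ 2 r(Λ₀)`, and they miss `B_Λ`, since
`‖b‖ ≥ 2 r(Λ) ≥ r(Λ) + r(Λ₀)`. Summing over `b` gives `θ(Λ) · I(B_{Λ₀}) ≤ I(ℝ^d ∖ B_Λ)`.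
-/

open MeasureTheory

namespace Stmt10

variable (d : ℕ) (l : Fin d → ℝ)

/-- `f(x) = ∏_{j=1}^d (1+|x_j|)^{−l_j/2}`. -/
noncomputable def f (x : EuclideanSpace ℝ (Fin d)) : ℝ :=
  ∏ j, (1 + |x j|) ^ (-(l j) / 2)

/-- `θ(Λ) = Σ_{b ∈ Λ∖{0}} f(b)`. -/
noncomputable def theta (L : Submodule ℤ (EuclideanSpace ℝ (Fin d))) : ℝ :=
  ∑' b : {x : EuclideanSpace ℝ (Fin d) // x ∈ L ∧ x ≠ 0}, f d l b

/-- `r(Λ) = (1/2)·min{‖b‖ : b ∈ Λ∖{0}}`. -/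
noncomputable def rlat (L : Submodule ℤ (EuclideanSpace ℝ (Fin d))) : ℝ :=
  (1 / 2) * sInf {t : ℝ | ∃ b ∈ L, b ≠ 0 ∧ ‖b‖ = t}

/-- `B_Λ = {x ∈ ℝ^d : ‖x‖ ≤ r(Λ)}`. -/
noncomputable def ball (L : Submodule ℤ (EuclideanSpace ℝ (Fin d))) :
    Set (EuclideanSpace ℝ (Fin d)) :=
  {x | ‖x‖ ≤ rlat d L}

/-- `I(D) = ∫_D f(x) dx`. -/
noncomputable def Iof (D : Set (EuclideanSpace ℝ (Fin d))) : ℝ :=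
  ∫ x in D, f d l x

section Packing

variable {E : Type*} [NormedAddCommGroup E] [MeasurableSpace E] [BorelSpace E]
  {μ : Measure E} {g : E → ℝ}

lemma mul_setIntegral_ball_le_setIntegral_ball [μ.IsAddRightInvariant] (hg : Integrable g μ)
    (hmul : ∀ x y, g x * g y ≤ g (x + y)) (b : E) (ρ : ℝ) :
    g b * ∫ x in Metric.ball 0 ρ, g x ∂μ ≤ ∫ x in Metric.ball b ρ, g x ∂μ := by
  have htranslate :
      ∫ x in Metric.ball b ρ, g x ∂μ = ∫ y in Metric.ball 0 ρ, g (y + b) ∂μ := by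
    rw [← (measurePreserving_add_right μ b).setIntegral_preimage_emb
      (measurableEmbedding_addRight b), Metric.preimage_add_right_ball, sub_self]
  rw [htranslate, ← integral_const_mul]
  refine setIntegral_mono (hg.integrableOn.const_mul _) (hg.comp_add_right b).integrableOn
    fun y => ?_
  simpa only [mul_comm] using hmul y b

lemma sum_mul_setIntegral_ball_le [μ.IsAddRightInvariant] (hg : Integrable g μ) (hg0 : 0 ≤ g)
    (hmul : ∀ x y, g x * g y ≤ g (x + y)) {ι : Type*} (b : ι → E) {ρ r : ℝ} (hρr : ρ ≤ r)
    (hsep : Pairwise fun i j => 2 * ρ ≤ ‖b i - b j‖) (hfar : ∀ i, 2 * r ≤ ‖b i‖)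
    (F : Finset ι) :
    (∑ i ∈ F, g (b i)) * ∫ x in Metric.ball 0 ρ, g x ∂μ ≤
      ∫ x in (Metric.closedBall 0 r)ᶜ, g x ∂μ := by
  have hdisj : (F : Set ι).Pairwise (Function.onFun Disjoint fun i => Metric.ball (b i) ρ) :=
    fun i _ j _ hij => Metric.ball_disjoint_ball (by rw [dist_eq_norm]; linarith [hsep hij])
  have hout : (⋃ i ∈ F, Metric.ball (b i) ρ) ⊆ (Metric.closedBall 0 r)ᶜ := by
    refine Set.iUnion₂_subset fun i _ => Set.subset_compl_comm.1 ?_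
    refine (Metric.closedBall_disjoint_ball ?_).subset_compl_right
    rw [dist_zero_left]
    linarith [hfar i]
  calc (∑ i ∈ F, g (b i)) * ∫ x in Metric.ball 0 ρ, g x ∂μ
      ≤ ∑ i ∈ F, ∫ x in Metric.ball (b i) ρ, g x ∂μ := by
        rw [Finset.sum_mul]
        exact Finset.sum_le_sum fun i _ => mul_setIntegral_ball_le_setIntegral_ball hg hmul _ _
    _ = ∫ x in ⋃ i ∈ F, Metric.ball (b i) ρ, g x ∂μ :=
        (integral_biUnion_finset F (fun _ _ => measurableSet_ball) hdisj
          fun _ _ => hg.integrableOn).symm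
    _ ≤ ∫ x in (Metric.closedBall 0 r)ᶜ, g x ∂μ :=
        setIntegral_mono_set hg.integrableOn (Filter.Eventually.of_forall hg0)
          hout.eventuallyLE

end Packing

lemma setIntegral_closedBall_eq_ball {E : Type*} [NormedAddCommGroup E] [NormedSpace ℝ E]
    [FiniteDimensional ℝ E] [MeasurableSpace E] [BorelSpace E] (μ : Measure E)
    [μ.IsAddHaarMeasure] (g : E → ℝ) (x : E) {r : ℝ} (hr : r ≠ 0) :
    ∫ y in Metric.closedBall x r, g y ∂μ = ∫ y in Metric.ball x r, g y ∂μ := by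
  refine setIntegral_congr_set (ae_eq_set.2 ⟨?_, ?_⟩)
  · rw [Metric.closedBall_sdiff_ball]
    exact Measure.addHaar_sphere_of_ne_zero μ x hr
  · rw [Set.sdiff_eq_empty.2 Metric.ball_subset_closedBall, measure_empty]

section Weight

lemma f_pos (x : EuclideanSpace ℝ (Fin d)) : 0 < f d l x :=
  Finset.prod_pos fun _ _ => by positivity

lemma integrable_f (hl : ∀ j, 2 < l j) : Integrable (f d l) := by
  have hfactor (j : Fin d) : Integrable fun t : ℝ => (1 + |t|) ^ (-(l j) / 2) := by
    simpa only [Real.norm_eq_abs, neg_div] using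
      integrable_one_add_norm (E := ℝ) (μ := volume) (r := l j / 2)
        (by rw [Module.finrank_self, Nat.cast_one]; linarith [hl j])
  exact ((PiLp.volume_preserving_ofLp (Fin d)).integrable_comp_emb
    (MeasurableEquiv.toLp 2 (Fin d → ℝ)).symm.measurableEmbedding).2
      (Integrable.fintype_prod hfactor)

lemma f_mul_f_le (hl : ∀ j, 0 ≤ l j) (x y : EuclideanSpace ℝ (Fin d)) :
    f d l x * f d l y ≤ f d l (x + y) := by
  rw [f, f, f, ← Finset.prod_mul_distrib]
  refine Finset.prod_le_prod (fun j _ => by positivity) fun j _ => ?_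
  rw [← Real.mul_rpow (by positivity) (by positivity), PiLp.add_apply]
  refine Real.rpow_le_rpow_of_nonpos (by positivity) ?_ (by linarith [hl j])
  nlinarith [abs_add_le (x j) (y j), abs_nonneg (x j), abs_nonneg (y j)]

lemma setIntegral_f_ball_pos (x : EuclideanSpace ℝ (Fin d)) {r : ℝ} (hr : 0 < r)
    (hf : Integrable (f d l)) : 0 < ∫ y in Metric.ball x r, f d l y := by
  rw [setIntegral_pos_iff_support_of_nonneg_ae
    (Filter.Eventually.of_forall fun y => (f_pos d l y).le) hf.integrableOn,
    Function.support_eq_univ fun y => (f_pos d l y).ne', Set.univ_inter]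
  exact Metric.measure_ball_pos volume x hr

end Weight

section Radius

variable {d} {L L₀ : Submodule ℤ (EuclideanSpace ℝ (Fin d))}

lemma ball_eq_closedBall : ball d L = Metric.closedBall 0 (rlat d L) := by
  ext x
  exact mem_closedBall_zero_iff.symm

lemma two_mul_rlat_le_norm {b : EuclideanSpace ℝ (Fin d)} (hb : b ∈ L) (hb0 : b ≠ 0) :
    2 * rlat d L ≤ ‖b‖ := by
  have : sInf {t : ℝ | ∃ b ∈ L, b ≠ 0 ∧ ‖b‖ = t} ≤ ‖b‖ :=
    csInf_le ⟨0, by rintro _ ⟨b, -, -, rfl⟩; exact norm_nonneg b⟩ ⟨b, hb, hb0, rfl⟩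
  rw [rlat]
  linarith

lemma rlat_anti (h : L ≤ L₀) {b : EuclideanSpace ℝ (Fin d)} (hb : b ∈ L) (hb0 : b ≠ 0) :
    rlat d L₀ ≤ rlat d L := by
  have : sInf {t : ℝ | ∃ b ∈ L₀, b ≠ 0 ∧ ‖b‖ = t} ≤ sInf {t : ℝ | ∃ b ∈ L, b ≠ 0 ∧ ‖b‖ = t} :=
    csInf_le_csInf ⟨0, by rintro _ ⟨b, -, -, rfl⟩; exact norm_nonneg b⟩ ⟨‖b‖, b, hb, hb0, rfl⟩
      fun _ ⟨b, hb, hb0, hbt⟩ => ⟨b, h hb, hb0, hbt⟩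
  rw [rlat, rlat]
  linarith

lemma rlat_pos [DiscreteTopology L] {b : EuclideanSpace ℝ (Fin d)} (hb : b ∈ L) (hb0 : b ≠ 0) :
    0 < rlat d L := by
  obtain ⟨ε, hε, hball⟩ := Metric.exists_ball_inter_eq_singleton_of_mem_discrete
    (isDiscrete_iff_discreteTopology.2 ‹_›) L.zero_mem
  have : ε ≤ sInf {t : ℝ | ∃ b ∈ L, b ≠ 0 ∧ ‖b‖ = t} := by
    refine le_csInf ⟨‖b‖, b, hb, hb0, rfl⟩ ?_
    rintro _ ⟨c, hc, hc0, rfl⟩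
    by_contra! hcε
    have : c ∈ Metric.ball 0 ε ∩ L := ⟨mem_ball_zero_iff.2 hcε, hc⟩
    exact hc0 (by simpa [hball] using this)
  rw [rlat]
  linarith

end Radius

theorem statement10 (hl4 : ∀ j, 4 ≤ l j)
    (Λ Λ₀ : Submodule ℤ (EuclideanSpace ℝ (Fin d)))
    (hΛ₀disc : DiscreteTopology Λ₀)
    (hsub : Λ ≤ Λ₀) :
    theta d l Λ ≤ (Iof d l (ball d Λ₀))⁻¹ * Iof d l ((Set.univ : Set (EuclideanSpace ℝ (Fin d))) \ ball d Λ) := by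
  have hf_nonneg : 0 ≤ f d l := fun x => (f_pos d l x).le
  have hf := integrable_f d l fun j => by linarith [hl4 j]
  rcases isEmpty_or_nonempty {x : EuclideanSpace ℝ (Fin d) // x ∈ Λ ∧ x ≠ 0} with
    _ | ⟨⟨v, hvΛ, hv0⟩⟩
  · rw [theta, tsum_empty]
    exact mul_nonneg (inv_nonneg.2 (integral_nonneg hf_nonneg)) (integral_nonneg hf_nonneg)
  have hr₀ : 0 < rlat d Λ₀ := rlat_pos (hsub hvΛ) hv0
  have hI₀ := setIntegral_f_ball_pos d l 0 hr₀ hf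
  rw [theta, Iof, Iof, ball_eq_closedBall, ball_eq_closedBall, ← Set.compl_eq_univ_sdiff,
    setIntegral_closedBall_eq_ball volume _ _ hr₀.ne']
  refine tsum_le_of_sum_le' (mul_nonneg (inv_nonneg.2 hI₀.le) (integral_nonneg hf_nonneg))
    fun F => ?_
  rw [inv_mul_eq_div, le_div_iff₀ hI₀]
  refine sum_mul_setIntegral_ball_le hf hf_nonneg (f_mul_f_le d l fun j => by linarith [hl4 j])
    Subtype.val (rlat_anti hsub hvΛ hv0) (fun b c hbc => ?_)
    (fun b => two_mul_rlat_le_norm b.2.1 b.2.2) F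
  exact two_mul_rlat_le_norm (sub_mem (hsub b.2.1) (hsub c.2.1))
    (sub_ne_zero.2 (Subtype.coe_ne_coe.2 hbc))

end Stmt10
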